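/- Let G be a simple graph on n vertices with a partition (V_1, …, V_k) of its vertex set, and let H be the graph obtained from G as follows: add all edges inside each V_i (turning each V_i into a clique); for each i, add two new vertices x_i and y_i, each adjacent exactly to all vertices of V_i; and add a new vertex z adjacent exactly to all vertices of V(G). If I is an independent set of G containing exactly one vertex from each V_i, then the set I ∪ {x_1, …, x_k, y_1, …, y_k, z} induces an acyclic subgraph of H on 3k + 1 vertices; consequently, H has a feedback vertex set of size n − k. -/

import Mathlib

/-!
In `H`, the set `I ∪ {x_1, …, x_k, y_1, …, y_k, z}` spans a tree of depth two rooted at `z`: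
`z` is joined to every vertex of `I`, and `x_i`, `y_i` hang off the unique vertex of `I` in `V_i`.
There are no edges inside `I`, since `I` is independent in `G` and meets each clique `V_i` once.
So every vertex has at most one neighbour of smaller depth, which rules out cycles. As `I` is a
transversal of the partition, `|I| = k`, and the complement of the tree is a feedback vertex set
of size `(n + 2k + 1) - (3k + 1) = n - k`.
-/

/-- The graph `H` built from `G` with vertex partition `P : Fin k → Set V`: each part `P i` is
turned into a clique, two new vertices `x_i = Sum.inr (Sum.inl (i, false))` and
`y_i = Sum.inr (Sum.inl (i, true))` are each adjacent exactly to the vertices of `P i`, and a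
new vertex `z = Sum.inr (Sum.inr ())` is adjacent exactly to all vertices of `G`. -/
def Hgraph {V : Type*} (G : SimpleGraph V) {k : ℕ} (P : Fin k → Set V) :
    SimpleGraph (V ⊕ ((Fin k × Bool) ⊕ Unit)) :=
  SimpleGraph.fromRel fun a b =>
    match a, b with
    | Sum.inl u, Sum.inl v => G.Adj u v ∨ ∃ i, u ∈ P i ∧ v ∈ P i
    | Sum.inl u, Sum.inr (Sum.inl (i, _)) => u ∈ P i
    | Sum.inl _, Sum.inr (Sum.inr _) => True
    | _, _ => False

/-- The vertex set `I ∪ {x_1, …, x_k, y_1, …, y_k, z}` of `H`. -/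
def Fset {V : Type*} (k : ℕ) (I : Set V) : Set (V ⊕ ((Fin k × Bool) ⊕ Unit)) :=
  Sum.inl '' I ∪ Sum.inr '' Set.univ

open SimpleGraph

lemma SimpleGraph.isAcyclic_of_rank {α β : Type*} [LinearOrder β] {Γ : SimpleGraph α}
    (f : α → β)
    (hne : ∀ ⦃u v⦄, Γ.Adj u v → f u ≠ f v)
    (hlower : ∀ ⦃u v w⦄, Γ.Adj u v → Γ.Adj u w → f v < f u → f w < f u → v = w) :
    Γ.IsAcyclic := by
  classical
  intro a c hc
  obtain ⟨u, hu, hmax⟩ := c.support.toFinset.exists_max_image f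
    ⟨a, List.mem_toFinset.2 c.start_mem_support⟩
  rw [List.mem_toFinset] at hu
  -- Rotate the cycle to start at a vertex of maximal rank: both its cycle-neighbours are lower.
  set c' := c.rotate u hu
  have hc' : c'.IsCycle := hc.rotate hu
  have lower : ∀ n, Γ.Adj u (c'.getVert n) → f (c'.getVert n) < f u := fun n hadj =>
    have hn := (c.mem_support_rotate_iff u hu).1 (c'.getVert_mem_support n)
    (hmax _ (List.mem_toFinset.2 hn)).lt_of_ne (hne hadj).symm
  have hsnd := c'.adj_snd hc'.not_nil
  have hpen := (c'.adj_penultimate hc'.not_nil).symm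
  exact hc'.snd_ne_penultimate (hlower hsnd hpen (lower _ hsnd) (lower _ hpen))

section hgraph

variable {V : Type*} {G : SimpleGraph V} {k : ℕ} {P : Fin k → Set V}

@[simp]
lemma hgraph_adj_inl_inl {u v : V} :
    (Hgraph G P).Adj (.inl u) (.inl v) ↔
      u ≠ v ∧ (G.Adj u v ∨ ∃ i, u ∈ P i ∧ v ∈ P i) := by
  simp only [Hgraph, fromRel_adj, ne_eq, Sum.inl.injEq]
  grind [G.adj_comm]

@[simp]
lemma hgraph_adj_inl_terminal {u : V} {i : Fin k} {b : Bool} :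
    (Hgraph G P).Adj (.inl u) (.inr (.inl (i, b))) ↔ u ∈ P i := by
  simp [Hgraph]

@[simp]
lemma hgraph_not_adj_inr_inr (a b : (Fin k × Bool) ⊕ Unit) :
    ¬ (Hgraph G P).Adj (.inr a) (.inr b) := by
  simp [Hgraph]

end hgraph

section fset

variable {V : Type*} {k : ℕ} {I : Set V}

@[simp]
lemma inl_mem_fset {u : V} :
    (.inl u : V ⊕ (Fin k × Bool) ⊕ Unit) ∈ Fset k I ↔ u ∈ I := by
  simp [Fset]

lemma ncard_fset (hI : I.Finite) : (Fset k I).ncard = I.ncard + (2 * k + 1) := by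
  have hdisj : Disjoint (Sum.inl '' I : Set (V ⊕ (Fin k × Bool) ⊕ Unit)) (Sum.inr '' .univ) :=
    Set.disjoint_left.2 fun _ ⟨_, _, hu⟩ ⟨_, _, ha⟩ => Sum.inl_ne_inr (hu.trans ha.symm)
  rw [Fset, Set.ncard_union_eq hdisj (hI.image _) (Set.toFinite _),
    Set.ncard_image_of_injective _ Sum.inl_injective,
    Set.ncard_image_of_injective _ Sum.inr_injective, Set.ncard_univ]
  simp [Fintype.card_sum]
  ring

def depth : V ⊕ (Fin k × Bool) ⊕ Unit → ℕ :=
  Sum.elim (fun _ => 1) (Sum.elim (fun _ => 2) fun _ => 0)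

end fset

lemma isAcyclic_induce_hgraph_fset {V : Type*} (G : SimpleGraph V) {k : ℕ} (P : Fin k → Set V)
    {I : Set V} (hI : I.Pairwise fun u v => ¬ G.Adj u v) (hsub : ∀ i, (I ∩ P i).Subsingleton) :
    ((Hgraph G P).induce (Fset k I)).IsAcyclic := by
  have hindep : ∀ ⦃u v⦄, u ∈ I → v ∈ I → ¬ (Hgraph G P).Adj (.inl u) (.inl v) := by
    intro u v hu hv hadj
    obtain ⟨huv, hG | ⟨i, hui, hvi⟩⟩ := hgraph_adj_inl_inl.1 hadj
    · exact hI hu hv huv hG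
    · exact huv (hsub i ⟨hu, hui⟩ ⟨hv, hvi⟩)
  apply isAcyclic_of_rank (fun w => depth w.1)
  · rintro ⟨u | (_ | _), hu⟩ ⟨v | (_ | _), hv⟩ hadj
    · exact absurd hadj (hindep (inl_mem_fset.1 hu) (inl_mem_fset.1 hv))
    all_goals simp_all [depth]
  · rintro ⟨u | (⟨i, b⟩ | _), hu⟩ ⟨v | (_ | _), hv⟩ ⟨w | (_ | _), hw⟩ huv huw _ _
    all_goals simp_all [depth]
    -- only `u = x_i` or `y_i` has two lower neighbours, and both lie in `I ∩ V_i`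
    exact hsub i ⟨inl_mem_fset.1 hv, hgraph_adj_inl_terminal.1 huv.symm⟩
      ⟨inl_mem_fset.1 hw, hgraph_adj_inl_terminal.1 huw.symm⟩

lemma ncard_eq_of_existsUnique_mem_inter {V ι : Type*} [Finite ι] (P : ι → Set V)
    (hcov : ⋃ i, P i = .univ) (hdisj : ∀ i j, i ≠ j → Disjoint (P i) (P j)) {I : Set V}
    (hone : ∀ i, ∃! v, v ∈ I ∧ v ∈ P i) :
    I.ncard = Nat.card ι := by
  choose g hgI hgP using fun i => (hone i).exists
  have hinj : g.Injective := fun i j hij => by_contra fun hne =>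
    Set.disjoint_left.1 (hdisj i j hne) (hgP i) (hij ▸ hgP j)
  have hrange : Set.range g = I := by
    refine Set.Subset.antisymm (Set.range_subset_iff.2 hgI) fun v hv => ?_
    obtain ⟨i, hi⟩ := Set.mem_iUnion.1 (hcov ▸ Set.mem_univ v)
    exact ⟨i, (hone i).unique ⟨hgI i, hgP i⟩ ⟨hv, hi⟩⟩
  rw [← hrange, Set.ncard_range_of_injective hinj]

/-- If `I` is an independent set of `G` containing exactly one vertex from
each part `P i` of a partition `(P 1, …, P k)` of `V(G)`, then `I ∪ {x_1, …, x_k, y_1, …, y_k, z}`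
induces an acyclic subgraph of `H` on `3k + 1` vertices; consequently, `H` has a feedback vertex
set of size `n − k`, where `n = |V(G)|`. -/
theorem stmt10 {V : Type*} [Fintype V] (G : SimpleGraph V) {k : ℕ} (P : Fin k → Set V)
    (hcov : (⋃ i, P i) = Set.univ)
    (hdisj : ∀ i j, i ≠ j → Disjoint (P i) (P j))
    (I : Set V) (hI : I.Pairwise fun u v => ¬ G.Adj u v)
    (hone : ∀ i, ∃! v, v ∈ I ∧ v ∈ P i) :
    ((Hgraph G P).induce (Fset k I)).IsAcyclic ∧ (Fset k I).ncard = 3 * k + 1 ∧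
      ∃ X : Set (V ⊕ ((Fin k × Bool) ⊕ Unit)),
        X.ncard = Fintype.card V - k ∧ ((Hgraph G P).induce Xᶜ).IsAcyclic := by
  have hacyc := isAcyclic_induce_hgraph_fset G P hI fun i _ hv _ hw => (hone i).unique hv hw
  have hIk : I.ncard = k := by simpa using ncard_eq_of_existsUnique_mem_inter P hcov hdisj hone
  have hcard : (Fset k I).ncard = 3 * k + 1 := by rw [ncard_fset I.toFinite, hIk]; ring
  refine ⟨hacyc, hcard, (Fset k I)ᶜ, ?_, by rwa [compl_compl]⟩
  have htot := Set.ncard_add_ncard_compl (Fset k I)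
  simp only [hcard, Nat.card_eq_fintype_card, Fintype.card_sum, Fintype.card_prod, Fintype.card_fin,
    Fintype.card_bool, Fintype.card_unit] at htot
  omega
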